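/- arXiv:1801.04965 — 3 statements merged into one kernel-verified Lean document; each statement's English description precedes it below -/
import Mathlib

section
/- Let u and v be adjacent vertices of a graph G, and for k ≥ 1 let G_{u,v,k} be the graph obtained from the disjoint union of G and a path x_0, x_1, ..., x_{k+1} by identifying u with x_0 and v with x_{k+1}. Then γ(G) = γ(G_{u,v,0}) ≤ γ(G_{u,v,k}) ≤ γ(G_{u,v,k+1}) for all k ≥ 1. -/
/-- `D` is a dominating set of `G`: every vertex not in `D` has a neighbor in `D`. -/
def isDomSet {V : Type*} (G : SimpleGraph V) (D : Finset V) : Prop :=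
  ∀ v, v ∉ D → ∃ u ∈ D, G.Adj u v

/-- The domination number: minimum cardinality of a dominating set. -/
noncomputable def domNum {V : Type*} (G : SimpleGraph V) : ℕ :=
  sInf {n | ∃ D : Finset V, D.card = n ∧ isDomSet G D}

/-- The `(u,v)`-path-addition graph `G_{u,v,k}`: add an internally disjoint path with
`k` internal vertices between `u` and `v`. -/
noncomputable def pathAdd {V : Type*} (G : SimpleGraph V) (u v : V) (k : ℕ) :
    SimpleGraph (V ⊕ Fin k) :=
  SimpleGraph.fromRel (fun a b =>
    match a, b with
    | Sum.inl x, Sum.inl y => G.Adj x y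
    | Sum.inl x, Sum.inr i => (x = u ∧ (i : ℕ) = 0) ∨ (x = v ∧ (i : ℕ) = k - 1)
    | Sum.inr _, Sum.inl _ => False
    | Sum.inr i, Sum.inr j => (j : ℕ) = (i : ℕ) + 1)

lemma pathAdd_adj_inl_inl {V : Type*} (G : SimpleGraph V) (u v : V) (k : ℕ) (x y : V) :
    (pathAdd G u v k).Adj (Sum.inl x) (Sum.inl y) ↔ G.Adj x y := by
  simp only [pathAdd, SimpleGraph.fromRel_adj]
  constructor
  · rintro ⟨-, h | h⟩
    · exact h
    · exact h.symm
  · intro h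
    exact ⟨by simp [h.ne], Or.inl h⟩

lemma pathAdd_adj_inl_inr {V : Type*} (G : SimpleGraph V) (u v : V) (k : ℕ) (x : V) (i : Fin k) :
    (pathAdd G u v k).Adj (Sum.inl x) (Sum.inr i) ↔
      (x = u ∧ (i : ℕ) = 0) ∨ (x = v ∧ (i : ℕ) = k - 1) := by
  simp [pathAdd, SimpleGraph.fromRel_adj]

lemma pathAdd_adj_inr_inr {V : Type*} (G : SimpleGraph V) (u v : V) (k : ℕ) (i j : Fin k) :
    (pathAdd G u v k).Adj (Sum.inr i) (Sum.inr j) ↔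
      i ≠ j ∧ ((j : ℕ) = (i : ℕ) + 1 ∨ (i : ℕ) = (j : ℕ) + 1) := by
  simp [pathAdd, SimpleGraph.fromRel_adj]

lemma domNum_mem {A : Type*} [Fintype A] (G : SimpleGraph A) :
    ∃ D : Finset A, D.card = domNum G ∧ isDomSet G D := by
  have : domNum G ∈ {n | ∃ D : Finset A, D.card = n ∧ isDomSet G D} :=
    Nat.sInf_mem ⟨Finset.univ.card, Finset.univ, rfl, fun w hw => absurd (Finset.mem_univ w) hw⟩
  exact this

lemma transfer {A B : Type*} [Fintype A] [DecidableEq B] (G : SimpleGraph A) (H : SimpleGraph B)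
    (f : A → B) (hf : ∀ D : Finset A, isDomSet G D → isDomSet H (D.image f)) :
    domNum H ≤ domNum G := by
  obtain ⟨D, hcard, hdom⟩ := domNum_mem G
  calc domNum H ≤ (D.image f).card := Nat.sInf_le ⟨D.image f, rfl, hf D hdom⟩
    _ ≤ D.card := Finset.card_image_le
    _ = domNum G := hcard

theorem stmt5 {V : Type*} [Fintype V] (G : SimpleGraph V) (u v : V) (h : G.Adj u v) :
    domNum G = domNum (pathAdd G u v 0) ∧
    ∀ k : ℕ, 1 ≤ k →
      domNum (pathAdd G u v 0) ≤ domNum (pathAdd G u v k) ∧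
      domNum (pathAdd G u v k) ≤ domNum (pathAdd G u v (k + 1)) := by
  classical
  -- γ(G) ≤ γ(pathAdd G u v k) for any k, via projection to V (path vertices ↦ u)
  have key : ∀ k : ℕ, domNum G ≤ domNum (pathAdd G u v k) := by
    intro k
    apply transfer (pathAdd G u v k) G (Sum.elim id (fun _ => u))
    intro D hD w hw
    have hwD : Sum.inl w ∉ D := fun hc => hw (Finset.mem_image.mpr ⟨Sum.inl w, hc, rfl⟩)
    obtain ⟨d, hd, hadj⟩ := hD (Sum.inl w) hwD
    cases d with
    | inl y =>
      exact ⟨y, Finset.mem_image.mpr ⟨Sum.inl y, hd, rfl⟩,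
        (pathAdd_adj_inl_inl G u v k y w).mp hadj⟩
    | inr i =>
      have := (pathAdd_adj_inl_inr G u v k w i).mp hadj.symm
      have hu : u ∈ D.image (Sum.elim id (fun _ => u)) :=
        Finset.mem_image.mpr ⟨Sum.inr i, hd, rfl⟩
      rcases this with ⟨hwu, -⟩ | ⟨hwv, -⟩
      · exact absurd (hwu ▸ hu) hw
      · exact ⟨u, hu, hwv ▸ h⟩
  -- γ(pathAdd G u v 0) ≤ γ(G)
  have le0 : domNum (pathAdd G u v 0) ≤ domNum G := by
    apply transfer G (pathAdd G u v 0) Sum.inl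
    intro D hD w hw
    cases w with
    | inl x =>
      have hx : x ∉ D := fun hc => hw (Finset.mem_image.mpr ⟨x, hc, rfl⟩)
      obtain ⟨d, hd, hadj⟩ := hD x hx
      exact ⟨Sum.inl d, Finset.mem_image.mpr ⟨d, hd, rfl⟩,
        (pathAdd_adj_inl_inl G u v 0 d x).mpr hadj⟩
    | inr i => exact i.elim0
  have heq : domNum G = domNum (pathAdd G u v 0) := le_antisymm (key 0) le0
  refine ⟨heq, fun k hk => ⟨heq ▸ key k, ?_⟩⟩
  -- γ(pathAdd k) ≤ γ(pathAdd (k+1)): collapse the last internal vertex onto v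
  apply transfer (pathAdd G u v (k + 1)) (pathAdd G u v k)
      (fun a => match a with
        | Sum.inl x => Sum.inl x
        | Sum.inr i => if hi : (i : ℕ) < k then Sum.inr ⟨(i : ℕ), hi⟩ else Sum.inl v)
  intro D hD w hw
  cases w with
  | inl x =>
    have hx : Sum.inl x ∉ D := fun hc => hw (Finset.mem_image.mpr ⟨Sum.inl x, hc, rfl⟩)
    obtain ⟨d, hd, hadj⟩ := hD (Sum.inl x) hx
    cases d with
    | inl y =>
      refine ⟨Sum.inl y, Finset.mem_image.mpr ⟨Sum.inl y, hd, rfl⟩, ?_⟩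
      exact (pathAdd_adj_inl_inl G u v k y x).mpr ((pathAdd_adj_inl_inl G u v (k+1) y x).mp hadj)
    | inr i =>
      rcases (pathAdd_adj_inl_inr G u v (k+1) x i).mp hadj.symm with ⟨hxu, hi0⟩ | ⟨hxv, hik⟩
      · have h0k : (0 : ℕ) < k := hk
        refine ⟨Sum.inr ⟨0, h0k⟩, Finset.mem_image.mpr ⟨Sum.inr i, hd, ?_⟩, ?_⟩
        · simp [hi0, h0k]
        · exact (((pathAdd_adj_inl_inr G u v k x ⟨0, h0k⟩).mpr (Or.inl ⟨hxu, rfl⟩))).symm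
      · -- i = k, collapses to v = x, so w ∈ image: contradiction
        exfalso
        apply hw
        refine Finset.mem_image.mpr ⟨Sum.inr i, hd, ?_⟩
        have : ¬ ((i : ℕ) < k) := by omega
        simp [this, hxv]
  | inr j =>
    have hjk : (j : ℕ) < k := j.isLt
    have hjD : Sum.inr (⟨(j : ℕ), by omega⟩ : Fin (k+1)) ∉ D := by
      intro hc
      apply hw
      refine Finset.mem_image.mpr ⟨_, hc, ?_⟩
      simp [hjk]
    obtain ⟨d, hd, hadj⟩ := hD _ hjD
    cases d with
    | inl y =>
      rcases (pathAdd_adj_inl_inr G u v (k+1) y _).mp hadj with ⟨hyu, hj0⟩ | ⟨hyv, hjkk⟩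
      · refine ⟨Sum.inl y, Finset.mem_image.mpr ⟨Sum.inl y, hd, rfl⟩, ?_⟩
        exact (pathAdd_adj_inl_inr G u v k y j).mpr (Or.inl ⟨hyu, hj0⟩)
      · exfalso; simp at hjkk; omega
    | inr i =>
      obtain ⟨hne, hcase⟩ := (pathAdd_adj_inr_inr G u v (k+1) i _).mp hadj
      rcases hcase with hji | hij
      · -- j = i + 1, so i < j < k
        have hik : (i : ℕ) < k := by omega
        refine ⟨Sum.inr ⟨(i : ℕ), hik⟩, Finset.mem_image.mpr ⟨Sum.inr i, hd, by simp [hik]⟩, ?_⟩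
        refine (pathAdd_adj_inr_inr G u v k _ j).mpr ⟨?_, Or.inl (by simpa using hji)⟩
        intro hc
        apply_fun (Fin.val) at hc
        simp at hc hji; omega
      · -- i = j + 1
        by_cases hik : (i : ℕ) < k
        · refine ⟨Sum.inr ⟨(i : ℕ), hik⟩, Finset.mem_image.mpr ⟨Sum.inr i, hd, by simp [hik]⟩, ?_⟩
          refine (pathAdd_adj_inr_inr G u v k _ j).mpr ⟨?_, Or.inr (by simpa using hij)⟩
          intro hc
          apply_fun (Fin.val) at hc
          simp at hc hij; omega
        · -- i = k, so j = k - 1 ; image is inl v, adjacent to inr j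
          refine ⟨Sum.inl v, Finset.mem_image.mpr ⟨Sum.inr i, hd, by simp [hik]⟩, ?_⟩
          refine (pathAdd_adj_inl_inr G u v k v j).mpr (Or.inr ⟨rfl, ?_⟩)
          simp at hij
          omega
end

section
/- Let u and v be adjacent vertices of a graph G and let G_{u,v,2} be obtained from G by adding a path u, x_1, x_2, v of two new internal vertices (so x_1 is adjacent to u and x_2, and x_2 is adjacent to x_1 and v). Then γ(G) ≤ γ(G_{u,v,2}) ≤ γ(G) + 1, and γ(G_{u,v,2}) = γ(G) if and only if either some minimum dominating set of G contains both u and v, or at least one of u, v satisfies γ(G − w) < γ(G). -/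
/-!
Collapsing each new vertex `x_i` onto its endpoint maps dominating sets of `G_{u,v,2}` onto
dominating sets of `G`, which gives the lower bound; adding `x_1` to a dominating set of `G` gives
the upper bound. If `γ(G_{u,v,2}) = γ(G)`, the collapse of a minimum dominating set `D'` of
`G_{u,v,2}` is a minimum dominating set of `G`, so the collapse is injective on `D'`. Either its
image contains `u` and `v`, or for some `i` both `x_i` and its endpoint are missing from `D'`. Then
`x_i` is dominated by the other new vertex `x_j`, injectivity keeps the endpoint of `x_j` out of
`D'`, and `D' ∩ V(G)` dominates `G` minus that endpoint with fewer than `γ(G)` vertices. Conversely,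
a minimum dominating set of `G - w` together with the new vertex next to `w` dominates
`G_{u,v,2}`.
-/

open Finset Sum

section Domination

variable {V : Type*} {G : SimpleGraph V}

lemma domNum_le_card {D : Finset V} (hD : isDomSet G D) : domNum G ≤ D.card :=
  Nat.sInf_le ⟨D, rfl, hD⟩

lemma exists_isDomSet_card_eq_domNum [Finite V] (G : SimpleGraph V) :
    ∃ D : Finset V, isDomSet G D ∧ D.card = domNum G := by
  have := Fintype.ofFinite V
  obtain ⟨D, hcard, hD⟩ := Nat.sInf_mem (s := {n | ∃ D : Finset V, D.card = n ∧ isDomSet G D})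
    ⟨_, univ, rfl, fun w hw => absurd (mem_univ w) hw⟩
  exact ⟨D, hD, hcard⟩

lemma domNum_induce_ne_le {a : V} {D : Finset V} (ha : a ∉ D)
    (hD : ∀ w, w ≠ a → w ∉ D → ∃ z ∈ D, G.Adj z w) :
    domNum (G.induce {w | w ≠ a}) ≤ D.card := by
  classical
  refine (domNum_le_card (D := D.subtype (· ≠ a)) ?_).trans ?_
  · rintro ⟨w, hw⟩ hwD
    obtain ⟨z, hz, hzw⟩ := hD w hw (by simpa using hwD)
    exact ⟨⟨z, ne_of_mem_of_not_mem hz ha⟩, by simpa using hz, hzw⟩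
  · simpa only [card_subtype] using card_filter_le D _

lemma exists_card_eq_domNum_induce_ne [Finite V] (G : SimpleGraph V) (a : V) :
    ∃ D : Finset V, D.card = domNum (G.induce {w | w ≠ a}) ∧
      ∀ w, w ≠ a → w ∉ D → ∃ z ∈ D, G.Adj z w := by
  obtain ⟨D₀, hD₀, hcard⟩ := exists_isDomSet_card_eq_domNum (G.induce {w | w ≠ a})
  refine ⟨D₀.map (Function.Embedding.subtype _), by rw [card_map, hcard], fun w hw hwD => ?_⟩
  obtain ⟨z, hz, hzw⟩ := hD₀ ⟨w, hw⟩ fun h => hwD (mem_map_of_mem _ h)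
  exact ⟨z, mem_map_of_mem _ hz, hzw⟩

end Domination

section PathAddTwo

variable {V : Type*} {G : SimpleGraph V} {u v : V}

lemma pathAdd_two_adj_inl_inl {x y : V} :
    (pathAdd G u v 2).Adj (inl x) (inl y) ↔ G.Adj x y := by
  simp only [pathAdd, SimpleGraph.fromRel_adj, ne_eq, inl.injEq, G.adj_comm y x, or_self]
  exact ⟨And.right, fun h => ⟨G.ne_of_adj h, h⟩⟩

lemma pathAdd_two_adj_inl_inr {x : V} {i : Fin 2} :
    (pathAdd G u v 2).Adj (inl x) (inr i) ↔ x = ![u, v] i := by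
  fin_cases i <;> simp [pathAdd]

lemma pathAdd_two_adj_inr_inr {i j : Fin 2} :
    (pathAdd G u v 2).Adj (inr i) (inr j) ↔ i ≠ j := by
  simp only [pathAdd, SimpleGraph.fromRel_adj, ne_eq, inr.injEq]
  omega

lemma isDomSet.image_pathAdd_two [DecidableEq V] {D : Finset (V ⊕ Fin 2)}
    (hD : isDomSet (pathAdd G u v 2) D) : isDomSet G (D.image (Sum.elim id ![u, v])) := by
  intro w hw
  obtain ⟨z | i, hz, hzw⟩ := hD (inl w) fun h => hw (mem_image_of_mem _ h)
  · exact ⟨z, mem_image_of_mem _ hz, pathAdd_two_adj_inl_inl.mp hzw⟩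
  · exact absurd (pathAdd_two_adj_inl_inr.mp hzw.symm ▸ mem_image_of_mem _ hz) hw

lemma isDomSet.toLeft_pathAdd_two {D : Finset (V ⊕ Fin 2)} {j : Fin 2}
    (hD : isDomSet (pathAdd G u v 2) D) (hj : ∀ i, inr i ∈ D → i = j) :
    ∀ w, w ≠ ![u, v] j → w ∉ D.toLeft → ∃ z ∈ D.toLeft, G.Adj z w := by
  intro w hw hwD
  obtain ⟨z | i, hz, hzw⟩ := hD (inl w) (by simpa using hwD)
  · exact ⟨z, by simpa using hz, pathAdd_two_adj_inl_inl.mp hzw⟩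
  · exact absurd (hj i hz ▸ pathAdd_two_adj_inl_inr.mp hzw.symm) hw

lemma isDomSet_pathAdd_two_disjSum_empty {D : Finset V} (hD : isDomSet G D) (hu : u ∈ D)
    (hv : v ∈ D) : isDomSet (pathAdd G u v 2) (D.disjSum ∅) := by
  rintro (w | j) hw
  · obtain ⟨z, hz, hzw⟩ := hD w (by simpa using hw)
    exact ⟨inl z, by simpa using hz, pathAdd_two_adj_inl_inl.mpr hzw⟩
  · exact ⟨inl (![u, v] j), by fin_cases j <;> simpa, pathAdd_two_adj_inl_inr.mpr rfl⟩

lemma isDomSet_pathAdd_two_disjSum_singleton {D : Finset V} {i : Fin 2}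
    (hD : ∀ w, w ≠ ![u, v] i → w ∉ D → ∃ z ∈ D, G.Adj z w) :
    isDomSet (pathAdd G u v 2) (D.disjSum {i}) := by
  rintro (w | j) hw
  · by_cases hwi : w = ![u, v] i
    · exact ⟨inr i, by simp, (pathAdd_two_adj_inl_inr.mpr hwi).symm⟩
    · obtain ⟨z, hz, hzw⟩ := hD w hwi (by simpa using hw)
      exact ⟨inl z, by simpa using hz, pathAdd_two_adj_inl_inl.mpr hzw⟩
  · exact ⟨inr i, by simp, pathAdd_two_adj_inr_inr.mpr fun h => hw (by simp [h])⟩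

theorem domNum_le_domNum_pathAdd_two [Finite V] : domNum G ≤ domNum (pathAdd G u v 2) := by
  classical
  obtain ⟨D, hD, hcard⟩ := exists_isDomSet_card_eq_domNum (pathAdd G u v 2)
  exact (domNum_le_card hD.image_pathAdd_two).trans (card_image_le.trans hcard.le)

theorem domNum_pathAdd_two_le_succ [Finite V] : domNum (pathAdd G u v 2) ≤ domNum G + 1 := by
  obtain ⟨D, hD, hcard⟩ := exists_isDomSet_card_eq_domNum G
  simpa [card_disjSum, hcard] using
    domNum_le_card (isDomSet_pathAdd_two_disjSum_singleton (u := u) (v := v) (i := 0)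
      fun w _ hw => hD w hw)

theorem domNum_pathAdd_two_le_card {D : Finset V} (hD : isDomSet G D) (hu : u ∈ D)
    (hv : v ∈ D) : domNum (pathAdd G u v 2) ≤ D.card := by
  simpa [card_disjSum] using domNum_le_card (isDomSet_pathAdd_two_disjSum_empty hD hu hv)

theorem domNum_pathAdd_two_le_domNum_induce_succ [Finite V] (i : Fin 2) :
    domNum (pathAdd G u v 2) ≤ domNum (G.induce {w | w ≠ ![u, v] i}) + 1 := by
  obtain ⟨D, hcard, hD⟩ := exists_card_eq_domNum_induce_ne G (![u, v] i)
  simpa [card_disjSum, hcard] using domNum_le_card (isDomSet_pathAdd_two_disjSum_singleton hD)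

theorem exists_or_domNum_induce_lt_of_domNum_pathAdd_two_le [Finite V]
    (hle : domNum (pathAdd G u v 2) ≤ domNum G) :
    (∃ D : Finset V, isDomSet G D ∧ D.card = domNum G ∧ u ∈ D ∧ v ∈ D) ∨
      ∃ i, domNum (G.induce {w | w ≠ ![u, v] i}) < domNum G := by
  classical
  obtain ⟨D', hD', hcard⟩ := exists_isDomSet_card_eq_domNum (pathAdd G u v 2)
  set p : V ⊕ Fin 2 → V := Sum.elim id ![u, v]
  have hP : isDomSet G (D'.image p) := hD'.image_pathAdd_two
  have hPmin : (D'.image p).card = domNum G :=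
    le_antisymm (card_image_le.trans (hcard.trans_le hle)) (domNum_le_card hP)
  have hinj : Set.InjOn p D' :=
    card_image_iff.mp (le_antisymm card_image_le ((hcard.trans_le hle).trans hPmin.ge))
  by_cases hends : ∀ i, ![u, v] i ∈ D'.image p
  · exact Or.inl ⟨_, hP, hPmin, hends 0, hends 1⟩
  obtain ⟨i, hi⟩ := not_forall.mp hends
  have hi' : inr i ∉ D' := fun h => hi (mem_image_of_mem p h)
  obtain ⟨j, hj, hji⟩ : ∃ j, inr j ∈ D' ∧ j ≠ i := by
    obtain ⟨z | j, hz, hzi⟩ := hD' (inr i) hi'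
    · exact absurd (pathAdd_two_adj_inl_inr.mp hzi ▸ mem_image_of_mem p hz) hi
    · exact ⟨j, hz, pathAdd_two_adj_inr_inr.mp hzi⟩
  have hpath : ∀ k, inr k ∈ D' → k = j := fun k hk => by
    have : k ≠ i := fun h => hi' (h ▸ hk)
    omega
  have hej : inl (![u, v] j) ∉ D' := fun h => inl_ne_inr (hinj h hj rfl)
  refine Or.inr ⟨j, ?_⟩
  calc domNum (G.induce _) ≤ D'.toLeft.card :=
        domNum_induce_ne_le (by simpa using hej) (hD'.toLeft_pathAdd_two hpath)
    _ < D'.card := by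
        have := card_toLeft_add_card_toRight (u := D')
        have : 0 < D'.toRight.card := card_pos.mpr ⟨j, by simpa using hj⟩
        omega
    _ ≤ domNum G := hcard ▸ hle

end PathAddTwo

theorem stmt8_general {V : Type*} [Fintype V] (G : SimpleGraph V) (u v : V) :
    domNum G ≤ domNum (pathAdd G u v 2) ∧
    domNum (pathAdd G u v 2) ≤ domNum G + 1 ∧
    (domNum (pathAdd G u v 2) = domNum G ↔
      ((∃ D : Finset V, isDomSet G D ∧ D.card = domNum G ∧ u ∈ D ∧ v ∈ D) ∨
        domNum (G.induce {w | w ≠ u}) < domNum G ∨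
        domNum (G.induce {w | w ≠ v}) < domNum G)) := by
  have lower : domNum G ≤ domNum (pathAdd G u v 2) := domNum_le_domNum_pathAdd_two
  refine ⟨lower, domNum_pathAdd_two_le_succ, ⟨fun heq => ?_, fun hcases => ?_⟩⟩
  · simpa [Fin.exists_fin_two] using
      exists_or_domNum_induce_lt_of_domNum_pathAdd_two_le heq.le
  · refine le_antisymm ?_ lower
    rcases hcases with ⟨D, hD, hcard, hu, hv⟩ | hlt | hlt
    · exact hcard ▸ domNum_pathAdd_two_le_card hD hu hv
    · exact (domNum_pathAdd_two_le_domNum_induce_succ 0).trans hlt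
    · exact (domNum_pathAdd_two_le_domNum_induce_succ 1).trans hlt

theorem stmt8 {V : Type*} [Fintype V] (G : SimpleGraph V) (u v : V) (h : G.Adj u v) :
    domNum G ≤ domNum (pathAdd G u v 2) ∧
    domNum (pathAdd G u v 2) ≤ domNum G + 1 ∧
    (domNum (pathAdd G u v 2) = domNum G ↔
      ((∃ D : Finset V, isDomSet G D ∧ D.card = domNum G ∧ u ∈ D ∧ v ∈ D) ∨
        domNum (G.induce {w | w ≠ u}) < domNum G ∨
        domNum (G.induce {w | w ≠ v}) < domNum G)) :=
  stmt8_general G u v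
end

section
/- For a graph G with at least one edge, Epa(G) = 3 if and only if G has a minimum dominating set that is not independent, where Epa(G) is the maximum over adjacent pairs u,v of the least k with γ(G_{u,v,k}) > γ(G). In particular Epa(G) ≤ 3 always holds. -/
/-- `pa G u v` is the least `k ≥ 1` such that adding a path with `k` internal vertices
between `u` and `v` increases the domination number. -/
noncomputable def pa {V : Type*} (G : SimpleGraph V) (u v : V) : ℕ :=
  sInf {k | 1 ≤ k ∧ domNum G < domNum (pathAdd G u v k)}

/-- `Epa G` is the maximum of `pa G u v` over adjacent pairs `u, v`. -/
noncomputable def Epa {V : Type*} (G : SimpleGraph V) : ℕ :=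
  sSup {n | ∃ u v, G.Adj u v ∧ pa G u v = n}

section Helpers

variable {V : Type*} [Fintype V] {G : SimpleGraph V} {u v : V} {k : ℕ}

lemma isDomSet_univ (G : SimpleGraph V) : isDomSet G Finset.univ :=
  fun w hw => absurd (Finset.mem_univ w) hw

lemma domNum_le {D : Finset V} (h : isDomSet G D) : domNum G ≤ D.card :=
  Nat.sInf_le ⟨D, rfl, h⟩

lemma domNum_spec (G : SimpleGraph V) : ∃ D : Finset V, D.card = domNum G ∧ isDomSet G D := by
  have : domNum G ∈ {n | ∃ D : Finset V, D.card = n ∧ isDomSet G D} :=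
    Nat.sInf_mem ⟨Finset.univ.card, Finset.univ, rfl, isDomSet_univ G⟩
  obtain ⟨D, h1, h2⟩ := this
  exact ⟨D, h1, h2⟩

lemma pa_adj_ll {x y : V} : (pathAdd G u v k).Adj (Sum.inl x) (Sum.inl y) ↔ G.Adj x y := by
  simp only [pathAdd, SimpleGraph.fromRel_adj]
  constructor
  · rintro ⟨-, h | h⟩
    · exact h
    · exact h.symm
  · intro h
    exact ⟨by simp [h.ne], Or.inl h⟩

lemma pa_adj_lr {x : V} {i : Fin k} :
    (pathAdd G u v k).Adj (Sum.inl x) (Sum.inr i) ↔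
      (x = u ∧ (i : ℕ) = 0) ∨ (x = v ∧ (i : ℕ) = k - 1) := by
  simp only [pathAdd, SimpleGraph.fromRel_adj]
  constructor
  · rintro ⟨-, h | h⟩
    · exact h
    · exact h.elim
  · intro h
    exact ⟨by simp, Or.inl h⟩

lemma pa_adj_rl {x : V} {i : Fin k} :
    (pathAdd G u v k).Adj (Sum.inr i) (Sum.inl x) ↔
      (x = u ∧ (i : ℕ) = 0) ∨ (x = v ∧ (i : ℕ) = k - 1) := by
  rw [SimpleGraph.adj_comm]; exact pa_adj_lr

lemma pa_adj_rr {i j : Fin k} :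
    (pathAdd G u v k).Adj (Sum.inr i) (Sum.inr j) ↔
      ((j : ℕ) = (i : ℕ) + 1 ∨ (i : ℕ) = (j : ℕ) + 1) := by
  simp only [pathAdd, SimpleGraph.fromRel_adj]
  constructor
  · rintro ⟨-, h | h⟩
    · exact Or.inl h
    · exact Or.inr h
  · intro h
    have hne : i ≠ j := by rintro rfl; omega
    exact ⟨by simpa using hne, h⟩

/-- keyB: if `D` dominates `G` and `u, v ∈ D`, then for `k = 1, 2` the image of `D`
dominates the path-added graph. -/
lemma keyB [DecidableEq V] {D : Finset V} (hD : isDomSet G D) (hu : u ∈ D) (hv : v ∈ D)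
    (hk : k = 1 ∨ k = 2) : domNum (pathAdd G u v k) ≤ D.card := by
  have hdom : isDomSet (pathAdd G u v k) (D.image Sum.inl) := by
    intro z hz
    match z with
    | Sum.inl w =>
      have hw : w ∉ D := fun h => hz (Finset.mem_image_of_mem _ h)
      obtain ⟨y, hy, hadj⟩ := hD w hw
      exact ⟨Sum.inl y, Finset.mem_image_of_mem _ hy, pa_adj_ll.2 hadj⟩
    | Sum.inr i =>
      have hi : (i : ℕ) = 0 ∨ (i : ℕ) = k - 1 := by
        have := i.isLt; rcases hk with rfl | rfl <;> omega
      rcases hi with hi | hi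
      · exact ⟨Sum.inl u, Finset.mem_image_of_mem _ hu, pa_adj_lr.2 (Or.inl ⟨rfl, hi⟩)⟩
      · exact ⟨Sum.inl v, Finset.mem_image_of_mem _ hv, pa_adj_lr.2 (Or.inr ⟨rfl, hi⟩)⟩
  calc domNum (pathAdd G u v k) ≤ (D.image Sum.inl).card := domNum_le hdom
    _ = D.card := Finset.card_image_of_injective _ Sum.inl_injective

lemma image_card_lt {α β : Type*} [DecidableEq α] [DecidableEq β] {s : Finset α} {f : α → β} {z : α}
    (hz : z ∈ s) (hfz : f z ∈ (s.erase z).image f) : (s.image f).card < s.card := by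
  have h1 : s.image f = (s.erase z).image f := by
    conv_lhs => rw [← Finset.insert_erase hz]
    rw [Finset.image_insert, Finset.insert_eq_self.mpr hfz]
  rw [h1]
  calc ((s.erase z).image f).card ≤ (s.erase z).card := Finset.card_image_le
    _ < s.card := Finset.card_erase_lt_of_mem hz

end Helpers

section KeyA
variable {V : Type*} [Fintype V] {G : SimpleGraph V} {u v : V}

set_option linter.unusedSectionVars false in
lemma keyA [DecidableEq V] (huv : G.Adj u v) : domNum G < domNum (pathAdd G u v 3) := by
  obtain ⟨D', hcard, hdom⟩ := domNum_spec (pathAdd G u v 3)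
  rw [← hcard]
  set f3 : V ⊕ Fin 3 → V := Sum.elim id fun _ => u with hf3
  have hdomimg : isDomSet G (D'.image f3) := by
    intro w hw
    have hwl : Sum.inl w ∉ D' := fun h => hw (Finset.mem_image.mpr ⟨_, h, rfl⟩)
    obtain ⟨z, hz, hadj⟩ := hdom _ hwl
    match z, hz, hadj with
    | Sum.inl y, hz, hadj => exact ⟨y, Finset.mem_image.mpr ⟨_, hz, rfl⟩, pa_adj_ll.1 hadj⟩
    | Sum.inr i, hz, hadj =>
      rcases pa_adj_rl.1 hadj with ⟨rfl, -⟩ | ⟨rfl, -⟩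
      · exact absurd (Finset.mem_image.mpr ⟨_, hz, rfl⟩) hw
      · exact ⟨u, Finset.mem_image.mpr ⟨_, hz, rfl⟩, huv⟩
  suffices h : ∃ D : Finset V, isDomSet G D ∧ D.card < D'.card by
    obtain ⟨D, hD, hlt⟩ := h
    exact lt_of_le_of_lt (domNum_le hD) hlt
  have htwo : ∀ i j : Fin 3, i ≠ j → Sum.inr i ∈ D' → Sum.inr j ∈ D' →
      ∃ D : Finset V, isDomSet G D ∧ D.card < D'.card := by
    intro i j hij hi hj
    refine ⟨D'.image f3, hdomimg, image_card_lt hi ?_⟩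
    exact Finset.mem_image.mpr ⟨Sum.inr j, Finset.mem_erase.mpr ⟨by simpa using hij.symm, hj⟩, rfl⟩
  have hcol : ∀ i : Fin 3, Sum.inr i ∈ D' → Sum.inl u ∈ D' →
      ∃ D : Finset V, isDomSet G D ∧ D.card < D'.card := by
    intro i hi hu'
    exact ⟨D'.image f3, hdomimg,
      image_card_lt hi (Finset.mem_image.mpr ⟨Sum.inl u, Finset.mem_erase.mpr ⟨by simp, hu'⟩, rfl⟩)⟩
  by_cases b0 : Sum.inr (0 : Fin 3) ∈ D' <;> by_cases b1 : Sum.inr (1 : Fin 3) ∈ D' <;>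
    by_cases b2 : Sum.inr (2 : Fin 3) ∈ D'
  · exact htwo 0 1 (by decide) b0 b1
  · exact htwo 0 1 (by decide) b0 b1
  · exact htwo 0 2 (by decide) b0 b2
  · -- inr 0 ∈ D' only
    have hv' : Sum.inl v ∈ D' := by
      obtain ⟨z, hz, hadj⟩ := hdom (Sum.inr 2) b2
      match z, hz, hadj with
      | Sum.inl x, hz, hadj =>
        rcases pa_adj_lr.1 hadj with ⟨-, h⟩ | ⟨rfl, -⟩
        · simp at h
        · exact hz
      | Sum.inr j, hz, hadj =>
        have h := pa_adj_rr.1 hadj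
        have hj := j.isLt
        have hv2 : ((2 : Fin 3) : ℕ) = 2 := rfl
        have : j = 1 := Fin.ext (by omega)
        subst this
        exact absurd hz b1
    refine ⟨(D'.erase (Sum.inr 0)).image f3, ?_, ?_⟩
    · intro w hw
      have hwl : Sum.inl w ∉ D' := fun h =>
        hw (Finset.mem_image.mpr ⟨_, Finset.mem_erase.mpr ⟨by simp, h⟩, rfl⟩)
      obtain ⟨z, hz, hadj⟩ := hdom _ hwl
      match z, hz, hadj with
      | Sum.inl y, hz, hadj =>
        exact ⟨y, Finset.mem_image.mpr ⟨_, Finset.mem_erase.mpr ⟨by simp, hz⟩, rfl⟩,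
          pa_adj_ll.1 hadj⟩
      | Sum.inr i, hz, hadj =>
        rcases pa_adj_rl.1 hadj with ⟨rfl, -⟩ | ⟨rfl, hi⟩
        · exact ⟨v, Finset.mem_image.mpr ⟨Sum.inl v, Finset.mem_erase.mpr ⟨by simp, hv'⟩, rfl⟩,
            huv.symm⟩
        · have : i = 2 := Fin.ext (by simpa using hi)
          subst this
          exact absurd hz b2
    · calc ((D'.erase (Sum.inr 0)).image f3).card ≤ (D'.erase (Sum.inr 0)).card :=
          Finset.card_image_le
        _ < D'.card := Finset.card_erase_lt_of_mem b0
  · exact htwo 1 2 (by decide) b1 b2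
  · -- inr 1 ∈ D' only
    refine ⟨(D'.erase (Sum.inr 1)).image f3, ?_, ?_⟩
    · intro w hw
      have hwl : Sum.inl w ∉ D' := fun h =>
        hw (Finset.mem_image.mpr ⟨_, Finset.mem_erase.mpr ⟨by simp, h⟩, rfl⟩)
      obtain ⟨z, hz, hadj⟩ := hdom _ hwl
      match z, hz, hadj with
      | Sum.inl y, hz, hadj =>
        exact ⟨y, Finset.mem_image.mpr ⟨_, Finset.mem_erase.mpr ⟨by simp, hz⟩, rfl⟩,
          pa_adj_ll.1 hadj⟩
      | Sum.inr i, hz, hadj =>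
        rcases pa_adj_rl.1 hadj with ⟨rfl, hi⟩ | ⟨rfl, hi⟩
        · have : i = 0 := Fin.ext (by simpa using hi)
          subst this
          exact absurd hz b0
        · have : i = 2 := Fin.ext (by simpa using hi)
          subst this
          exact absurd hz b2
    · calc ((D'.erase (Sum.inr 1)).image f3).card ≤ (D'.erase (Sum.inr 1)).card :=
          Finset.card_image_le
        _ < D'.card := Finset.card_erase_lt_of_mem b1
  · -- inr 2 ∈ D' only
    have hu' : Sum.inl u ∈ D' := by
      obtain ⟨z, hz, hadj⟩ := hdom (Sum.inr 0) b0
      match z, hz, hadj with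
      | Sum.inl x, hz, hadj =>
        rcases pa_adj_lr.1 hadj with ⟨rfl, -⟩ | ⟨-, h⟩
        · exact hz
        · simp at h
      | Sum.inr j, hz, hadj =>
        have h := pa_adj_rr.1 hadj
        have hj := j.isLt
        have hv0 : ((0 : Fin 3) : ℕ) = 0 := rfl
        have : j = 1 := Fin.ext (by omega)
        subst this
        exact absurd hz b1
    exact hcol 2 b2 hu'
  · -- no internal vertex in D' : contradiction
    exfalso
    obtain ⟨z, hz, hadj⟩ := hdom (Sum.inr 1) b1
    match z, hz, hadj with
    | Sum.inl x, hz, hadj =>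
      have hv1 : ((1 : Fin 3) : ℕ) = 1 := rfl
      rcases pa_adj_lr.1 hadj with ⟨-, h⟩ | ⟨-, h⟩ <;> omega
    | Sum.inr j, hz, hadj =>
      have h := pa_adj_rr.1 hadj
      have hj := j.isLt
      have hv1 : ((1 : Fin 3) : ℕ) = 1 := rfl
      rcases h with h | h
      · have : j = 0 := Fin.ext (by omega)
        subst this; exact absurd hz b0
      · have : j = 2 := Fin.ext (by omega)
        subst this; exact absurd hz b2

end KeyA

section KeyC
variable {V : Type*} [Fintype V] {G : SimpleGraph V} {u v : V}

set_option linter.unusedSectionVars false in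
lemma keyC_dom [DecidableEq V] (huv : G.Adj u v) {D' : Finset (V ⊕ Fin 2)}
    (hdom : isDomSet (pathAdd G u v 2) D') (h : V ⊕ Fin 2 → V) (hl : ∀ x, h (Sum.inl x) = x)
    (h0 : Sum.inr (0 : Fin 2) ∈ D' → (h (Sum.inr 0) = u ∨ ∃ y ∈ D'.image h, G.Adj y u))
    (h1 : Sum.inr (1 : Fin 2) ∈ D' → (h (Sum.inr 1) = v ∨ ∃ y ∈ D'.image h, G.Adj y v)) :
    isDomSet G (D'.image h) := by
  intro w hw
  have hwl : Sum.inl w ∉ D' := fun hm => hw (Finset.mem_image.mpr ⟨_, hm, hl w⟩)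
  obtain ⟨z, hz, hadj⟩ := hdom _ hwl
  match z, hz, hadj with
  | Sum.inl y, hz, hadj => exact ⟨y, Finset.mem_image.mpr ⟨_, hz, hl y⟩, pa_adj_ll.1 hadj⟩
  | Sum.inr i, hz, hadj =>
    rcases pa_adj_rl.1 hadj with ⟨rfl, hi⟩ | ⟨rfl, hi⟩
    · have : i = 0 := Fin.ext (by simpa using hi)
      subst this
      rcases h0 hz with he | ⟨y, hy, hyu⟩
      · exact absurd (Finset.mem_image.mpr ⟨_, hz, he⟩) hw
      · exact ⟨y, hy, hyu⟩
    · have : i = 1 := Fin.ext (by simpa using hi)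
      subst this
      rcases h1 hz with he | ⟨y, hy, hyv⟩
      · exact absurd (Finset.mem_image.mpr ⟨_, hz, he⟩) hw
      · exact ⟨y, hy, hyv⟩

set_option linter.unusedSectionVars false in
lemma keyC [DecidableEq V] (huv : G.Adj u v) (h2 : domNum (pathAdd G u v 2) ≤ domNum G) :
    ∃ D : Finset V, isDomSet G D ∧ D.card = domNum G ∧ ∃ a ∈ D, ∃ b ∈ D, G.Adj a b := by
  obtain ⟨D', hcard, hdom⟩ := domNum_spec (pathAdd G u v 2)
  have hle : D'.card ≤ domNum G := by rw [hcard]; exact h2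
  have mkcard : ∀ {D : Finset V}, isDomSet G D → D.card ≤ D'.card → D.card = domNum G :=
    fun {D} hD hc => le_antisymm (hc.trans hle) (domNum_le hD)
  set f : V ⊕ Fin 2 → V := Sum.elim id (fun i => if i = 0 then u else v) with hf
  have hfl : ∀ x, f (Sum.inl x) = x := fun _ => rfl
  have hf0 : f (Sum.inr 0) = u := by simp [hf]
  have hf1 : f (Sum.inr 1) = v := by simp [hf]
  by_cases b0 : Sum.inr (0 : Fin 2) ∈ D' <;> by_cases b1 : Sum.inr (1 : Fin 2) ∈ D'
  · -- both internal vertices in D'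
    have hd := keyC_dom huv hdom f hfl (fun _ => Or.inl hf0) (fun _ => Or.inl hf1)
    exact ⟨_, hd, mkcard hd Finset.card_image_le, u, Finset.mem_image.mpr ⟨_, b0, hf0⟩,
      v, Finset.mem_image.mpr ⟨_, b1, hf1⟩, huv⟩
  · -- only inr 0 ∈ D'
    by_cases hv' : Sum.inl v ∈ D'
    · have hd := keyC_dom huv hdom f hfl (fun _ => Or.inl hf0) (fun hm => absurd hm b1)
      exact ⟨_, hd, mkcard hd Finset.card_image_le, u, Finset.mem_image.mpr ⟨_, b0, hf0⟩,
        v, Finset.mem_image.mpr ⟨_, hv', hfl v⟩, huv⟩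
    · -- v is dominated by some y in the inl-part
      obtain ⟨z, hz, hadj⟩ := hdom (Sum.inl v) hv'
      set g : V ⊕ Fin 2 → V := Sum.elim id (fun _ => v) with hg
      have hgd := keyC_dom huv hdom g (fun _ => rfl)
        (fun _ => Or.inr ⟨v, Finset.mem_image.mpr ⟨Sum.inr 0, b0, rfl⟩, huv.symm⟩)
        (fun _ => Or.inl rfl)
      match z, hz, hadj with
      | Sum.inl y, hz, hadj =>
        exact ⟨_, hgd, mkcard hgd Finset.card_image_le, y, Finset.mem_image.mpr ⟨_, hz, rfl⟩,
          v, Finset.mem_image.mpr ⟨Sum.inr 0, b0, rfl⟩, pa_adj_ll.1 hadj⟩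
      | Sum.inr i, hz, hadj =>
        rcases pa_adj_rl.1 hadj with ⟨hvu, -⟩ | ⟨-, hi⟩
        · exact absurd hvu.symm huv.ne
        · have : i = 1 := Fin.ext (by simpa using hi)
          subst this
          exact absurd hz b1
  · -- only inr 1 ∈ D'
    by_cases hu' : Sum.inl u ∈ D'
    · have hd := keyC_dom huv hdom f hfl (fun hm => absurd hm b0) (fun _ => Or.inl hf1)
      exact ⟨_, hd, mkcard hd Finset.card_image_le, u, Finset.mem_image.mpr ⟨_, hu', hfl u⟩,
        v, Finset.mem_image.mpr ⟨_, b1, hf1⟩, huv⟩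
    · -- u is dominated by some y in the inl-part
      obtain ⟨z, hz, hadj⟩ := hdom (Sum.inl u) hu'
      set g : V ⊕ Fin 2 → V := Sum.elim id (fun _ => u) with hg
      have hgd := keyC_dom huv hdom g (fun _ => rfl)
        (fun _ => Or.inl rfl)
        (fun _ => Or.inr ⟨u, Finset.mem_image.mpr ⟨Sum.inr 1, b1, rfl⟩, huv⟩)
      match z, hz, hadj with
      | Sum.inl y, hz, hadj =>
        exact ⟨_, hgd, mkcard hgd Finset.card_image_le, y, Finset.mem_image.mpr ⟨_, hz, rfl⟩,
          u, Finset.mem_image.mpr ⟨Sum.inr 1, b1, rfl⟩, pa_adj_ll.1 hadj⟩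
      | Sum.inr i, hz, hadj =>
        rcases pa_adj_rl.1 hadj with ⟨-, hi⟩ | ⟨huv', -⟩
        · have : i = 0 := Fin.ext (by simpa using hi)
          subst this
          exact absurd hz b0
        · exact absurd huv' huv.ne
  · -- neither internal vertex in D'
    have hu' : Sum.inl u ∈ D' := by
      obtain ⟨z, hz, hadj⟩ := hdom (Sum.inr 0) b0
      match z, hz, hadj with
      | Sum.inl x, hz, hadj =>
        rcases pa_adj_lr.1 hadj with ⟨rfl, -⟩ | ⟨-, h⟩
        · exact hz
        · simp at h
      | Sum.inr j, hz, hadj =>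
        have h := pa_adj_rr.1 hadj
        have hj := j.isLt
        have hv0 : ((0 : Fin 2) : ℕ) = 0 := rfl
        have : j = 1 := Fin.ext (by omega)
        subst this
        exact absurd hz b1
    have hv' : Sum.inl v ∈ D' := by
      obtain ⟨z, hz, hadj⟩ := hdom (Sum.inr 1) b1
      match z, hz, hadj with
      | Sum.inl x, hz, hadj =>
        have hv1 : ((1 : Fin 2) : ℕ) = 1 := rfl
        rcases pa_adj_lr.1 hadj with ⟨-, h⟩ | ⟨rfl, -⟩
        · omega
        · exact hz
      | Sum.inr j, hz, hadj =>
        have h := pa_adj_rr.1 hadj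
        have hj := j.isLt
        have hv1 : ((1 : Fin 2) : ℕ) = 1 := rfl
        have : j = 0 := Fin.ext (by omega)
        subst this
        exact absurd hz b0
    have hd := keyC_dom huv hdom f hfl (fun hm => absurd hm b0) (fun hm => absurd hm b1)
    exact ⟨_, hd, mkcard hd Finset.card_image_le, u, Finset.mem_image.mpr ⟨_, hu', hfl u⟩,
      v, Finset.mem_image.mpr ⟨_, hv', hfl v⟩, huv⟩

end KeyC

theorem stmt11 {V : Type*} [Fintype V] (G : SimpleGraph V) (hE : ∃ a b, G.Adj a b) :
    Epa G ≤ 3 ∧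
    (Epa G = 3 ↔
      ∃ D : Finset V, isDomSet G D ∧ D.card = domNum G ∧ ∃ a ∈ D, ∃ b ∈ D, G.Adj a b) := by
  classical
  obtain ⟨a0, b0, hab0⟩ := hE
  have pa_le : ∀ {x y : V}, G.Adj x y → pa G x y ≤ 3 := fun {x y} h =>
    Nat.sInf_le ⟨by norm_num, keyA h⟩
  have hne : {n | ∃ u v, G.Adj u v ∧ pa G u v = n}.Nonempty := ⟨pa G a0 b0, a0, b0, hab0, rfl⟩
  have hbdd : ∀ n ∈ {n | ∃ u v, G.Adj u v ∧ pa G u v = n}, n ≤ 3 := by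
    rintro n ⟨x, y, hxy, rfl⟩
    exact pa_le hxy
  have h3 : Epa G ≤ 3 := csSup_le hne hbdd
  refine ⟨h3, ?_, ?_⟩
  · intro hE3
    have hmem : Epa G ∈ {n | ∃ u v, G.Adj u v ∧ pa G u v = n} :=
      Nat.sSup_mem hne ⟨3, fun n hn => hbdd n hn⟩
    rw [hE3] at hmem
    obtain ⟨x, y, hxy, hpa⟩ := hmem
    have h2 : ¬ (domNum G < domNum (pathAdd G x y 2)) := by
      intro hlt
      have : pa G x y ≤ 2 := Nat.sInf_le ⟨by norm_num, hlt⟩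
      omega
    exact keyC hxy (not_lt.1 h2)
  · rintro ⟨D, hdom, hcard, a, ha, b, hb, hab⟩
    have hpa3 : pa G a b = 3 := by
      apply le_antisymm (pa_le hab)
      refine le_csInf ⟨3, by norm_num, keyA hab⟩ ?_
      rintro k ⟨hk1, hklt⟩
      by_contra hlt
      push_neg at hlt
      have hk12 : k = 1 ∨ k = 2 := by omega
      have hub := keyB hdom ha hb hk12
      rw [hcard] at hub
      omega
    exact le_antisymm h3 (le_csSup ⟨3, fun n hn => hbdd n hn⟩ ⟨a, b, hab, hpa3⟩)
end
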